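/- For every ε with 0 < ε < 1/3 and every noiseless alternating binary protocol π of length n, there exists a deterministic robust interactive protocol Π with noiseless feedback over a 3-symbol alphabet (whose order of speaking may depend on the noise, via the jointly known received symbols), of length N ≤ c·n/ε for an absolute constant c > 0, such that for every input pair (x,y) and every noise pattern with at most (1/3 − ε)·N corrupted rounds, both parties output the transcript π(x,y). -/

import Mathlib

/-!
Both parties keep a common state `T ∈ {0,1}*`, computed from the received symbols: `0` and `1`
append a bit, `2` erases the last two bits. The party whose turn it is (by the parity of `|T|`)
checks the bits of `T` at its own positions against its input; if they all agree it sends its next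
bit of `π`, otherwise it sends `2`. Let `g` be the length of the longest prefix of `T` that agrees
with `π(x, y)`. The potential `|T| - 3⌈(|T| - g)/2⌉` rises by at least `1` in every uncorrupted
round, falls by at most `2` in every corrupted one, and never exceeds `g`. After `N` rounds with
`t` corruptions it is therefore at least `N - 3t ≥ n`, so the first `n` bits of `T` are `π(x, y)`.
-/

/-- A noiseless alternating binary protocol: Alice sends a bit in each odd round
(i.e., when the number of previously communicated bits is even) and Bob in each even
round, the bit being a fixed function of the sender's input and the past bits. -/
structure AltProtocol (X Y : Type) where
  nextA : X → List Bool → Bool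
  nextB : Y → List Bool → Bool

/-- The transcript of the first `n` rounds of the noiseless protocol on inputs `x, y`. -/
def AltProtocol.transcript {X Y : Type} (pr : AltProtocol X Y) (x : X) (y : Y) :
    ℕ → List Bool
  | 0 => []
  | n+1 =>
    let T := pr.transcript x y n
    T ++ [if T.length % 2 = 0 then pr.nextA x T else pr.nextB y T]

/-- A deterministic interactive protocol with noiseless feedback, of length `N` over
alphabet `Γ`: a speaker function on strings of received symbols (`true` = Alice),
next-symbol functions for each party (input and received symbols so far), and output
functions for each party (input and the full sequence of received symbols). -/
structure FeedbackProtocol (Γ X Y O : Type) (N : ℕ) where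
  ord : List Γ → Bool
  nextA : X → List Γ → Γ
  nextB : Y → List Γ → Γ
  outA : X → List Γ → O
  outB : Y → List Γ → O

/-- The symbol sent in round `i` of the execution with noise pattern `r`
(the received symbols): the speaker of round `i` is `ord` applied to the received
symbols so far, and it sends according to its next-symbol function. -/
def FeedbackProtocol.sent {Γ X Y O : Type} {N : ℕ} (P : FeedbackProtocol Γ X Y O N)
    (x : X) (y : Y) (r : Fin N → Γ) (i : Fin N) : Γ :=
  let h := (List.ofFn r).take i.val
  if P.ord h then P.nextA x h else P.nextB y h

/-- The number of corrupted rounds: rounds where the sent symbol differs from the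
received one. -/
def FeedbackProtocol.corruptions {Γ X Y O : Type} [DecidableEq Γ] {N : ℕ}
    (P : FeedbackProtocol Γ X Y O N) (x : X) (y : Y) (r : Fin N → Γ) : ℕ :=
  (Finset.univ.filter fun i : Fin N => P.sent x y r i ≠ r i).card

/-- The protocol has a fixed order of speaking if the speaker depends only on the
round number. -/
def FeedbackProtocol.FixedOrder {Γ X Y O : Type} {N : ℕ}
    (P : FeedbackProtocol Γ X Y O N) : Prop :=
  ∀ h h' : List Γ, h.length = h'.length → P.ord h = P.ord h'

theorem sub_mul_card_filter_le_sub {N : ℕ} (f : ℕ → ℤ) (bad : Fin N → Prop) [DecidablePred bad]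
    (a c : ℤ) (hstep : ∀ k : Fin N, f k + a - (if bad k then c else 0) ≤ f (k + 1)) :
    N * a - c * (Finset.univ.filter bad).card ≤ f N - f 0 := by
  calc N * a - c * (Finset.univ.filter bad).card = ∑ k : Fin N, (a - if bad k then c else 0) := by
        rw [Finset.sum_sub_distrib, Finset.card_filter, Nat.cast_sum, Finset.mul_sum]
        simp [mul_comm]
    _ ≤ ∑ k : Fin N, (f (k + 1) - f k) :=
        Finset.sum_le_sum fun k _ => by linarith [hstep k]
    _ = f N - f 0 := by
        rw [Fin.sum_univ_eq_sum_range (fun k => f (k + 1) - f k), Finset.sum_range_sub]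

namespace Simulation

def Consistent (f : List Bool → Bool) (p : ℕ) (T : List Bool) : Prop :=
  ∀ i < T.length, i % 2 = p → T[i]? = some (f (T.take i))

instance (f : List Bool → Bool) (p : ℕ) (T : List Bool) : Decidable (Consistent f p T) :=
  inferInstanceAs (Decidable (∀ i < T.length, _))

def reply (f : List Bool → Bool) (p : ℕ) (T : List Bool) : Fin 3 :=
  if Consistent f p T then (if f T then 1 else 0) else 2

def update (T : List Bool) (s : Fin 3) : List Bool :=
  if s = 2 then T.take (T.length - 2) else T ++ [decide (s = 1)]

def state (h : List (Fin 3)) : List Bool :=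
  h.foldl update []

theorem reply_congr {f g : List Bool → Bool} {p : ℕ} {T : List Bool}
    (hfg : ∀ T' : List Bool, T'.length % 2 = p → f T' = g T') (hT : T.length % 2 = p) :
    reply f p T = reply g p T := by
  have hcons : Consistent f p T ↔ Consistent g p T := by
    refine forall₂_congr fun i hi => imp_congr_right fun hip => ?_
    rw [hfg _ (by rwa [List.length_take, min_eq_left hi.le])]
  simp only [reply, hcons, hfg T hT]

theorem update_ite (T : List Bool) (b : Bool) : update T (if b then 1 else 0) = T ++ [b] := by
  cases b <;> simp [update]

theorem state_append_singleton (h : List (Fin 3)) (s : Fin 3) :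
    state (h ++ [s]) = update (state h) s := by
  simp [state]

end Simulation

open Simulation

namespace AltProtocol

variable {X Y : Type} (pr : AltProtocol X Y) (x : X) (y : Y)

def next (T : List Bool) : Bool :=
  if T.length % 2 = 0 then pr.nextA x T else pr.nextB y T

@[simp] theorem length_transcript (m : ℕ) : (pr.transcript x y m).length = m := by
  induction m with
  | zero => rfl
  | succ m ih => simp [transcript, ih]

theorem transcript_succ (m : ℕ) :
    pr.transcript x y (m + 1) = pr.transcript x y m ++ [pr.next x y (pr.transcript x y m)] :=
  rfl

theorem take_transcript {m' m : ℕ} (h : m' ≤ m) :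
    (pr.transcript x y m).take m' = pr.transcript x y m' := by
  induction m, h using Nat.le_induction with
  | base => simp
  | succ m hm ih =>
    rw [transcript_succ, List.take_append_of_le_length (by simpa), ih]

theorem getElem?_transcript {i m : ℕ} (h : i < m) :
    (pr.transcript x y m)[i]? = some (pr.next x y (pr.transcript x y i)) := by
  rw [← List.getElem?_take_of_lt (Nat.lt_succ_self i), take_transcript pr x y h, transcript_succ]
  simp

def goodLen (T : List Bool) : ℕ :=
  Nat.findGreatest (fun g => T.take g = pr.transcript x y g) T.length

theorem goodLen_le_length (T : List Bool) : pr.goodLen x y T ≤ T.length :=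
  Nat.findGreatest_le _

variable {pr x y}

theorem take_eq_transcript_iff_le_goodLen {T : List Bool} {g : ℕ} :
    T.take g = pr.transcript x y g ↔ g ≤ pr.goodLen x y T := by
  constructor
  · intro hg
    have hlen := congrArg List.length hg
    simp only [List.length_take, length_transcript] at hlen
    exact Nat.le_findGreatest (by omega) hg
  · intro hg
    have hgood : T.take (pr.goodLen x y T) = pr.transcript x y (pr.goodLen x y T) :=
      Nat.findGreatest_spec (P := fun g => T.take g = pr.transcript x y g) (Nat.zero_le _) rfl
    rw [← min_eq_left hg, ← List.take_take, hgood, take_transcript pr x y hg, min_eq_left hg]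

theorem consistent_transcript (p m : ℕ) :
    Consistent (pr.next x y) p (pr.transcript x y m) := by
  intro i hi _
  rw [length_transcript] at hi
  rw [getElem?_transcript pr x y hi, take_transcript pr x y hi.le]

theorem not_consistent_of_goodLen_lt {T : List Bool} (hlt : pr.goodLen x y T < T.length) :
    ¬ Consistent (pr.next x y) (pr.goodLen x y T % 2) T := by
  intro hcons
  have hgood := take_eq_transcript_iff_le_goodLen.mpr (le_refl (pr.goodLen x y T))
  have hbit := hcons _ hlt rfl
  rw [hgood] at hbit
  have : T.take (pr.goodLen x y T + 1) = pr.transcript x y (pr.goodLen x y T + 1) := by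
    rw [List.take_add_one, hbit, hgood, transcript_succ, Option.toList_some]
  exact absurd (take_eq_transcript_iff_le_goodLen.mp this) (Nat.not_succ_le_self _)

variable (pr x y) in
def symbol (T : List Bool) : Fin 3 :=
  reply (pr.next x y) (T.length % 2) T

theorem update_symbol_of_goodLen_eq {T : List Bool} (h : pr.goodLen x y T = T.length) :
    update T (pr.symbol x y T) = pr.transcript x y (T.length + 1) := by
  have hT : T = pr.transcript x y T.length := by
    conv_lhs => rw [← List.take_length (l := T)]
    exact take_eq_transcript_iff_le_goodLen.mpr h.ge
  rw [symbol, reply, if_pos (hT ▸ consistent_transcript _ _), update_ite, transcript_succ, ← hT]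

theorem symbol_eq_two {T : List Bool} (hlt : pr.goodLen x y T < T.length)
    (hpar : T.length % 2 = pr.goodLen x y T % 2) : pr.symbol x y T = 2 := by
  rw [symbol, reply, hpar, if_neg (not_consistent_of_goodLen_lt hlt)]

def potentialOf (L g : ℕ) : ℤ := L - 3 * ((L - g + 1) / 2 : ℕ)

variable (pr x y) in
def potential (T : List Bool) : ℤ := potentialOf T.length (pr.goodLen x y T)

theorem potentialOf_le_potential {T : List Bool} {g : ℕ} (hg : T.take g = pr.transcript x y g) :
    potentialOf T.length g ≤ pr.potential x y T := by
  have hg_le := take_eq_transcript_iff_le_goodLen.mp hg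
  have hle := goodLen_le_length pr x y T
  unfold potential potentialOf
  omega

variable (pr x y)

theorem potential_le_goodLen (T : List Bool) : pr.potential x y T ≤ pr.goodLen x y T := by
  have hle := goodLen_le_length pr x y T
  unfold potential potentialOf
  omega

theorem potentialOf_le_potential_append (T : List Bool) (b : Bool) :
    potentialOf (T.length + 1) (pr.goodLen x y T) ≤ pr.potential x y (T ++ [b]) := by
  have hgood : (T ++ [b]).take (pr.goodLen x y T) = pr.transcript x y (pr.goodLen x y T) := by
    rw [List.take_append_of_le_length (goodLen_le_length pr x y T)]
    exact take_eq_transcript_iff_le_goodLen.mpr le_rfl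
  simpa using potentialOf_le_potential hgood

theorem potentialOf_le_potential_take (T : List Bool) :
    potentialOf (T.length - 2) (min (pr.goodLen x y T) (T.length - 2)) ≤
      pr.potential x y (T.take (T.length - 2)) := by
  have hgood : (T.take (T.length - 2)).take (min (pr.goodLen x y T) (T.length - 2)) =
      pr.transcript x y (min (pr.goodLen x y T) (T.length - 2)) := by
    rw [List.take_take, min_eq_left (min_le_right _ _)]
    exact take_eq_transcript_iff_le_goodLen.mpr (min_le_left _ _)
  simpa using potentialOf_le_potential hgood

theorem potential_transcript (m : ℕ) : pr.potential x y (pr.transcript x y m) = m := by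
  have hle := goodLen_le_length pr x y (pr.transcript x y m)
  have hge : m ≤ pr.goodLen x y (pr.transcript x y m) :=
    take_eq_transcript_iff_le_goodLen.mp (take_transcript pr x y le_rfl)
  rw [length_transcript] at hle
  unfold potential potentialOf
  rw [length_transcript, le_antisymm hle hge]
  simp

theorem potential_sub_two_le_update (T : List Bool) (s : Fin 3) :
    pr.potential x y T - 2 ≤ pr.potential x y (update T s) := by
  have hle := goodLen_le_length pr x y T
  unfold update
  split_ifs
  · have hdrop := potentialOf_le_potential_take pr x y T
    unfold potential potentialOf at *
    omega
  · have happ := potentialOf_le_potential_append pr x y T (decide (s = 1))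
    unfold potential potentialOf at *
    omega

/-- If the first wrong bit of `T` is the speaker's, it erases; otherwise the wrong suffix of `T`
has odd length, and appending as well as erasing gains. -/
theorem potential_add_one_le_update_symbol (T : List Bool) :
    pr.potential x y T + 1 ≤ pr.potential x y (update T (pr.symbol x y T)) := by
  have hle := goodLen_le_length pr x y T
  have hdrop := potentialOf_le_potential_take pr x y T
  rcases hle.eq_or_lt with hG | hG
  · rw [update_symbol_of_goodLen_eq hG, potential_transcript]
    unfold potential potentialOf
    omega
  by_cases hpar : T.length % 2 = pr.goodLen x y T % 2
  · rw [symbol_eq_two hG hpar, update, if_pos rfl]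
    unfold potential potentialOf at *
    omega
  · have happ := potentialOf_le_potential_append pr x y T
      (decide (pr.symbol x y T = 1))
    unfold update
    split_ifs
    all_goals unfold potential potentialOf at *; omega

def simulation (n N : ℕ) : FeedbackProtocol (Fin 3) X Y (List Bool) N where
  ord h := (state h).length % 2 = 0
  nextA x' h := reply (pr.nextA x') 0 (state h)
  nextB y' h := reply (pr.nextB y') 1 (state h)
  outA _ h := (state h).take n
  outB _ h := (state h).take n

theorem sent_simulation {n N : ℕ} (r : Fin N → Fin 3) (k : Fin N) :
    (pr.simulation n N).sent x y r k = pr.symbol x y (state ((List.ofFn r).take k)) := by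
  rw [FeedbackProtocol.sent, symbol]
  by_cases hT : (state ((List.ofFn r).take k)).length % 2 = 0
  · have hA : (pr.simulation n N).ord ((List.ofFn r).take k) = true := decide_eq_true hT
    rw [if_pos hA, hT]
    exact reply_congr (fun T' hT' => by simp [next, hT']) hT
  · have hT : (state ((List.ofFn r).take k)).length % 2 = 1 := by omega
    have hB : (pr.simulation n N).ord ((List.ofFn r).take k) = false := decide_eq_false (by omega)
    rw [hB, if_neg Bool.false_ne_true, hT]
    exact reply_congr (fun T' hT' => by simp [next, hT']) hT

theorem state_take_succ {N : ℕ} (r : Fin N → Fin 3) (k : Fin N) :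
    state ((List.ofFn r).take (k + 1)) = update (state ((List.ofFn r).take k)) (r k) := by
  rw [List.take_add_one, List.getElem?_ofFn]
  simp [state_append_singleton]

theorem sub_three_mul_corruptions_le_potential {n N : ℕ} (r : Fin N → Fin 3) :
    (N : ℤ) - 3 * (pr.simulation n N).corruptions x y r ≤ pr.potential x y (state (List.ofFn r)) := by
  have h := sub_mul_card_filter_le_sub (fun k => pr.potential x y (state ((List.ofFn r).take k)))
    (fun k => (pr.simulation n N).sent x y r k ≠ r k) 1 3 fun k => by
      rw [state_take_succ, sent_simulation]
      split_ifs with hk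
      · linarith [potential_sub_two_le_update pr x y (state ((List.ofFn r).take k)) (r k)]
      · rw [← not_not.mp hk]
        linarith [potential_add_one_le_update_symbol pr x y (state ((List.ofFn r).take k))]
  have h0 : pr.potential x y [] = 0 := potential_transcript pr x y 0
  have hN : (List.ofFn r).take N = List.ofFn r := List.take_of_length_le (by simp)
  simpa [FeedbackProtocol.corruptions, state, h0, hN] using h

theorem simulation_correct {n N : ℕ} (r : Fin N → Fin 3)
    (h : n + 3 * (pr.simulation n N).corruptions x y r ≤ N) :
    (pr.simulation n N).outA x (List.ofFn r) = pr.transcript x y n ∧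
      (pr.simulation n N).outB y (List.ofFn r) = pr.transcript x y n := by
  have hpot := sub_three_mul_corruptions_le_potential pr x y (n := n) r
  have hle := potential_le_goodLen pr x y (state (List.ofFn r))
  have hout : (state (List.ofFn r)).take n = pr.transcript x y n :=
    take_eq_transcript_iff_le_goodLen.mpr (by omega)
  exact ⟨hout, hout⟩

end AltProtocol

theorem le_mul_mul_natCeil_inv {ε : ℝ} (hε : 0 < ε) (n : ℕ) : (n : ℝ) ≤ ε * (n * ⌈ε⁻¹⌉₊) := by
  calc (n : ℝ) = n * (ε * ε⁻¹) := by rw [mul_inv_cancel₀ hε.ne', mul_one]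
    _ ≤ n * (ε * ⌈ε⁻¹⌉₊) := by gcongr; exact Nat.le_ceil _
    _ = ε * (n * ⌈ε⁻¹⌉₊) := by ring

theorem mul_natCeil_inv_le {ε : ℝ} (hε : 0 < ε) (hε1 : ε ≤ 1) (n : ℕ) :
    (n : ℝ) * ⌈ε⁻¹⌉₊ ≤ 2 * n / ε := by
  have hceil := Nat.ceil_lt_add_one (inv_pos.mpr hε).le
  have hone : 1 ≤ ε⁻¹ := one_le_inv_iff₀.mpr ⟨hε, hε1⟩
  calc (n : ℝ) * ⌈ε⁻¹⌉₊ ≤ n * (2 * ε⁻¹) := by gcongr; linarith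
    _ = 2 * n / ε := by ring

/-- For every ε with 0 < ε < 1/3 and every noiseless alternating binary
protocol π of length n, there is a deterministic robust feedback protocol over a
3-symbol alphabet (the order of speaking may depend on the noise via the jointly known
received symbols), of length N ≤ c·n/ε for an absolute constant c > 0, such that for
every input pair and every noise pattern with at most (1/3 − ε)·N corrupted rounds,
both parties output the transcript π(x,y). -/
theorem feedback_arbitrary_order_large_alphabet :
    ∃ c : ℝ, 0 < c ∧
      ∀ (X Y : Type) (pr : AltProtocol X Y) (n : ℕ) (ε : ℝ),
        0 < ε → ε < 1/3 →
        ∃ (N : ℕ) (P : FeedbackProtocol (Fin 3) X Y (List Bool) N),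
          (N : ℝ) ≤ c * n / ε ∧
          ∀ (x : X) (y : Y) (r : Fin N → Fin 3),
            (P.corruptions x y r : ℝ) ≤ (1/3 - ε) * N →
            P.outA x (List.ofFn r) = pr.transcript x y n ∧
            P.outB y (List.ofFn r) = pr.transcript x y n := by
  refine ⟨2, two_pos, fun X Y pr n ε hε hε3 => ?_⟩
  set N := n * ⌈ε⁻¹⌉₊ with hN
  refine ⟨N, pr.simulation n N, ?_, fun x y r hr => pr.simulation_correct x y r ?_⟩
  · rw [hN, Nat.cast_mul]
    exact mul_natCeil_inv_le hε (by linarith) n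
  · have hn : (n : ℝ) ≤ ε * N := by
      rw [hN, Nat.cast_mul]
      exact le_mul_mul_natCeil_inv hε n
    have : (n : ℝ) + 3 * (pr.simulation n N).corruptions x y r ≤ N := by
      nlinarith [mul_nonneg hε.le (Nat.cast_nonneg (α := ℝ) N)]
    exact_mod_cast this
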